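/- Let c be a natural number and let p, q : Fin c → ℝ satisfy p i ≥ 0 and q i ≥ 0 for all i, with ∑_i p i ≤ 1 and ∑_i q i ≤ 1. Then ∑_i (p i − q i)² = 2 if and only if there exist indices a ≠ b such that p is the indicator vector of a (p a = 1 and p i = 0 for i ≠ a) and q is the indicator vector of b. -/
import Mathlib


theorem squared_diff_eq_two_iff (c : ℕ) (p q : Fin c → ℝ)
    (hp : ∀ i, 0 ≤ p i) (hq : ∀ i, 0 ≤ q i)
    (hps : ∑ i, p i ≤ 1) (hqs : ∑ i, q i ≤ 1) :
    ∑ i, (p i - q i) ^ 2 = 2 ↔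
      ∃ a b : Fin c, a ≠ b ∧
        (p a = 1 ∧ ∀ i, i ≠ a → p i = 0) ∧
        (q b = 1 ∧ ∀ i, i ≠ b → q i = 0) := by
  have hp1 : ∀ i, p i ≤ 1 := fun i =>
    le_trans (Finset.single_le_sum (fun j _ => hp j) (Finset.mem_univ i)) hps
  have hq1 : ∀ i, q i ≤ 1 := fun i =>
    le_trans (Finset.single_le_sum (fun j _ => hq j) (Finset.mem_univ i)) hqs
  constructor
  · intro h
    have hterm : ∀ i ∈ Finset.univ, (p i - q i) ^ 2 ≤ p i + q i := by
      intro i _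
      have h1 : p i ^ 2 ≤ p i := by nlinarith [hp i, hp1 i]
      have h2 : q i ^ 2 ≤ q i := by nlinarith [hq i, hq1 i]
      nlinarith [mul_nonneg (hp i) (hq i)]
    have hsum : ∑ i, (p i + q i) = ∑ i, p i + ∑ i, q i := Finset.sum_add_distrib
    have hle : ∑ i, (p i - q i) ^ 2 ≤ ∑ i, p i + ∑ i, q i := by
      rw [← hsum]; exact Finset.sum_le_sum hterm
    have hps1 : ∑ i, p i = 1 := by linarith
    have hqs1 : ∑ i, q i = 1 := by linarith
    have heq : ∀ i ∈ Finset.univ, (p i - q i) ^ 2 = p i + q i := by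
      rw [← Finset.sum_eq_sum_iff_of_le hterm]
      rw [hsum]; linarith
    have hkey : ∀ i, (p i = 0 ∨ p i = 1) ∧ (q i = 0 ∨ q i = 1) ∧ p i * q i = 0 := by
      intro i
      have h1 : p i ^ 2 ≤ p i := by nlinarith [hp i, hp1 i]
      have h2 : q i ^ 2 ≤ q i := by nlinarith [hq i, hq1 i]
      have h3 : 0 ≤ p i * q i := mul_nonneg (hp i) (hq i)
      have he := heq i (Finset.mem_univ i)
      have hp2 : p i ^ 2 = p i := by nlinarith
      have hq2 : q i ^ 2 = q i := by nlinarith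
      refine ⟨?_, ?_, by nlinarith⟩
      · rcases mul_eq_zero.mp (show p i * (p i - 1) = 0 by nlinarith) with h | h
        · exact Or.inl h
        · exact Or.inr (by linarith)
      · rcases mul_eq_zero.mp (show q i * (q i - 1) = 0 by nlinarith) with h | h
        · exact Or.inl h
        · exact Or.inr (by linarith)
    -- find a with p a = 1
    have ha : ∃ a, p a = 1 := by
      by_contra hcon
      push_neg at hcon
      have : ∀ i ∈ Finset.univ, p i = 0 := by
        intro i _
        rcases (hkey i).1 with h | h
        · exact h
        · exact absurd h (hcon i)
      rw [Finset.sum_eq_zero this] at hps1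
      norm_num at hps1
    have hb : ∃ b, q b = 1 := by
      by_contra hcon
      push_neg at hcon
      have : ∀ i ∈ Finset.univ, q i = 0 := by
        intro i _
        rcases (hkey i).2.1 with h | h
        · exact h
        · exact absurd h (hcon i)
      rw [Finset.sum_eq_zero this] at hqs1
      norm_num at hqs1
    obtain ⟨a, hpa⟩ := ha
    obtain ⟨b, hqb⟩ := hb
    have hprest : ∀ i, i ≠ a → p i = 0 := by
      intro i hia
      have hrest : ∑ j ∈ Finset.univ.erase a, p j = 0 := by
        have := Finset.add_sum_erase Finset.univ p (Finset.mem_univ a)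
        rw [← this, hpa] at hps1
        linarith
      exact (Finset.sum_eq_zero_iff_of_nonneg (fun j _ => hp j)).mp hrest i
        (Finset.mem_erase.mpr ⟨hia, Finset.mem_univ i⟩)
    have hqrest : ∀ i, i ≠ b → q i = 0 := by
      intro i hib
      have hrest : ∑ j ∈ Finset.univ.erase b, q j = 0 := by
        have := Finset.add_sum_erase Finset.univ q (Finset.mem_univ b)
        rw [← this, hqb] at hqs1
        linarith
      exact (Finset.sum_eq_zero_iff_of_nonneg (fun j _ => hq j)).mp hrest i
        (Finset.mem_erase.mpr ⟨hib, Finset.mem_univ i⟩)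
    have hab : a ≠ b := by
      intro hcon
      have := (hkey a).2.2
      rw [hpa, hcon, hqb] at this
      norm_num at this
    exact ⟨a, b, hab, ⟨hpa, hprest⟩, ⟨hqb, hqrest⟩⟩
  · rintro ⟨a, b, hab, ⟨hpa, hprest⟩, ⟨hqb, hqrest⟩⟩
    have hqa : q a = 0 := hqrest a hab
    have hpb : p b = 0 := hprest b (Ne.symm hab)
    have hfun : ∀ i, (p i - q i) ^ 2 =
        (if i = a then (1:ℝ) else 0) + (if i = b then (1:ℝ) else 0) := by
      intro i
      by_cases hia : i = a
      · subst hia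
        simp [hpa, hqa, hab]
      · by_cases hib : i = b
        · subst hib
          simp [hpb, hqb, hia]
        · simp [hprest i hia, hqrest i hib, hia, hib]
    rw [Finset.sum_congr rfl (fun i _ => hfun i), Finset.sum_add_distrib]
    simp
    norm_num
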